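/- Let Ω be a countably infinite set and S = Sym(Ω). Then S_(A) ≈ S_(B) for all A, B ∈ 𝒬; that is, the subgroups determined by partitions of Ω with a common finite bound on block sizes and infinitely many non-singleton blocks are mutually ≈-equivalent. -/

import Mathlib

open scoped Cardinal ENNReal

universe u

variable {Ω : Type u}

/-- The pointwise stabilizer of a set `s` inside a subgroup `G` of `Sym(Ω)`. -/
def pstab (G : Subgroup (Equiv.Perm Ω)) (s : Set Ω) : Subgroup (Equiv.Perm Ω) where
  carrier := {g | g ∈ G ∧ ∀ x ∈ s, g x = x}
  one_mem' := ⟨G.one_mem, fun _ _ => rfl⟩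
  mul_mem' := by
    rintro a b ⟨haG, ha⟩ ⟨hbG, hb⟩
    refine ⟨G.mul_mem haG hbG, fun x hx => ?_⟩
    simp [Equiv.Perm.mul_apply, hb x hx, ha x hx]
  inv_mem' := by
    rintro a ⟨haG, ha⟩
    refine ⟨G.inv_mem haG, fun x hx => ?_⟩
    conv_lhs => rw [← ha x hx]
    exact a.symm_apply_apply x

/-- For a family `A` of subsets of `Ω`, the subgroup of permutations carrying each
member of `A` onto itself. -/
def SAgrp (A : Set (Set Ω)) : Subgroup (Equiv.Perm Ω) where
  carrier := {f | ∀ s ∈ A, (f : Ω → Ω) '' s = s}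
  one_mem' := fun s _ => by simp
  mul_mem' := by
    intro a b ha hb s hs
    rw [Equiv.Perm.coe_mul, Set.image_comp, hb s hs, ha s hs]
  inv_mem' := by
    intro a ha s hs
    conv_lhs => rw [← ha s hs]
    rw [← Set.image_comp]
    simp

/-- `G₁ ≼_κ G₂` : there is a set `U` of permutations of cardinality `< κ` with
`G₁ ≤ ⟨G₂ ∪ U⟩`. -/
def Prec (κ : Cardinal.{u}) (G₁ G₂ : Subgroup (Equiv.Perm Ω)) : Prop :=
  ∃ U : Set (Equiv.Perm Ω), #U < κ ∧
    G₁ ≤ Subgroup.closure ((G₂ : Set (Equiv.Perm Ω)) ∪ U)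

/-- `G₁ ≈_κ G₂`. -/
def CApprox (κ : Cardinal.{u}) (G₁ G₂ : Subgroup (Equiv.Perm Ω)) : Prop :=
  Prec κ G₁ G₂ ∧ Prec κ G₂ G₁

/-- `G₁ ≼ G₂` (i.e. `≼_{ℵ₀}`, with `U` finite). -/
def PrecF (G₁ G₂ : Subgroup (Equiv.Perm Ω)) : Prop :=
  ∃ U : Set (Equiv.Perm Ω), U.Finite ∧
    G₁ ≤ Subgroup.closure ((G₂ : Set (Equiv.Perm Ω)) ∪ U)

/-- `G₁ ≈ G₂` (i.e. `≈_{ℵ₀}`). -/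
def ApproxF (G₁ G₂ : Subgroup (Equiv.Perm Ω)) : Prop :=
  PrecF G₁ G₂ ∧ PrecF G₂ G₁

/-- A generalized metric: a `[0,∞]`-valued metric. -/
structure IsGenMetric (d : Ω → Ω → ℝ≥0∞) : Prop where
  eq_zero_iff : ∀ α β, d α β = 0 ↔ α = β
  symm : ∀ α β, d α β = d β α
  triangle : ∀ α β γ, d α γ ≤ d α β + d β γ

/-- Open ball for a generalized metric. -/
def gball (d : Ω → Ω → ℝ≥0∞) (α : Ω) (r : ℝ≥0∞) : Set Ω := {β | d α β < r}

/-- `(Ω, d)` is `κ`-uncrowded: every ball of finite radius has `< κ` elements. -/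
def Uncrowded (κ : Cardinal.{u}) (d : Ω → Ω → ℝ≥0∞) : Prop :=
  ∀ (α : Ω) (r : ℝ≥0∞), r < ⊤ → #(gball d α r) < κ

/-- `(Ω, d)` is uniformly `κ`-uncrowded. -/
def UnifUncrowded (κ : Cardinal.{u}) (d : Ω → Ω → ℝ≥0∞) : Prop :=
  ∀ r : ℝ≥0∞, r < ⊤ → ∃ lam : Cardinal.{u}, lam < κ ∧ ∀ α : Ω, #(gball d α r) ≤ lam

/-- `g` is bounded with respect to `d` : `‖g‖_d = ⨆ α, d α (αg) < ∞`. -/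
def BoundedPerm (d : Ω → Ω → ℝ≥0∞) (g : Equiv.Perm Ω) : Prop :=
  (⨆ α : Ω, d α (g α)) < ⊤

/-- The function topology on `Sym(Ω)`: induced from the product topology on `Ω → Ω`
with `Ω` discrete. -/
def permTop (Ω : Type u) : TopologicalSpace (Equiv.Perm Ω) :=
  TopologicalSpace.induced (fun g : Equiv.Perm Ω => (g : Ω → Ω))
    (@Pi.topologicalSpace Ω (fun _ => Ω) (fun _ => ⊥))

/-- `G` is closed in `Sym(Ω)` in the function topology. -/
def FTClosed (G : Subgroup (Equiv.Perm Ω)) : Prop :=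
  @IsClosed _ (permTop Ω) (G : Set (Equiv.Perm Ω))

/-- `G` is discrete in the function topology. -/
def FTDiscrete (G : Subgroup (Equiv.Perm Ω)) : Prop :=
  @DiscreteTopology G
    (TopologicalSpace.induced (fun x : G => (x : Equiv.Perm Ω)) (permTop Ω))

/-- The orbit of `α` under a subgroup `H ≤ Sym(Ω)`. -/
def orb (H : Subgroup (Equiv.Perm Ω)) (α : Ω) : Set Ω := {β | ∃ g ∈ H, g α = β}

/-- A partition of `Ω`: a set of disjoint nonempty subsets with union `Ω`. -/
def IsPartition (A : Set (Set Ω)) : Prop :=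
  (∀ s ∈ A, s.Nonempty) ∧ A.PairwiseDisjoint id ∧ ⋃₀ A = Set.univ

/-- `A ∈ 𝒫`: a partition of `Ω` into finite subsets of unbounded cardinality. -/
def MemP (A : Set (Set Ω)) : Prop :=
  IsPartition A ∧ (∀ s ∈ A, s.Finite) ∧ ∀ n : ℕ, ∃ s ∈ A, (n : ℕ∞) < s.encard

/-- `A ∈ 𝒬`: a partition of `Ω` with a common finite bound on the cardinalities of
its members, infinitely many of which have more than one element. -/
def MemQ (A : Set (Set Ω)) : Prop :=
  IsPartition A ∧ (∃ n : ℕ, ∀ s ∈ A, s.encard ≤ (n : ℕ∞)) ∧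
    {s | s ∈ A ∧ 1 < s.encard}.Infinite

/-- The subgroup `FN(Ω,d)` of permutations of finite norm with respect to a
generalized metric `d`. -/
def FN (d : Ω → Ω → ℝ≥0∞) (hd : IsGenMetric d) : Subgroup (Equiv.Perm Ω) where
  carrier := {g | (⨆ α : Ω, d α (g α)) < ⊤}
  one_mem' := by
    have h : (⨆ α : Ω, d α ((1 : Equiv.Perm Ω) α)) ≤ 0 :=
      iSup_le fun α => le_of_eq ((hd.eq_zero_iff α ((1 : Equiv.Perm Ω) α)).2 rfl)
    exact lt_of_le_of_lt h (by simp)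
  mul_mem' := by
    intro a b ha hb
    have h : (⨆ α : Ω, d α ((a * b) α)) ≤
        (⨆ α : Ω, d α (b α)) + (⨆ α : Ω, d α (a α)) := by
      refine iSup_le fun α => ?_
      calc d α ((a * b) α) = d α (a (b α)) := by rw [Equiv.Perm.mul_apply]
        _ ≤ d α (b α) + d (b α) (a (b α)) := hd.triangle _ _ _
        _ ≤ _ := add_le_add (le_iSup (fun α : Ω => d α (b α)) α)
              (le_iSup (fun β : Ω => d β (a β)) (b α))
    exact lt_of_le_of_lt h (ENNReal.add_lt_top.2 ⟨hb, ha⟩)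
  inv_mem' := by
    intro a ha
    have h : (⨆ α : Ω, d α (a⁻¹ α)) ≤ ⨆ β : Ω, d β (a β) := by
      refine iSup_le fun α => ?_
      have e : d α (a⁻¹ α) = d (a⁻¹ α) (a (a⁻¹ α)) := by
        rw [show a (a⁻¹ α) = α from a.apply_symm_apply α]; exact hd.symm _ _
      rw [e]
      exact le_iSup (fun β : Ω => d β (a β)) (a⁻¹ α)
    exact lt_of_le_of_lt h ha


/-!
Write `G(P)` for the permutations preserving each pair of a system `P` of disjoint pairs and
fixing everything outside `⋃₀ P`. If the blocks of `A` have at most `n` points, enumerate each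
block by `Fin n` and take its first point as base point. For `f ∈ S_(A)`, swapping every base
point with its image under `f` is a product of elements of the groups `G(P_j)`, where `P_j`
pairs each base point with the `j`-th point of its block; afterwards the base points are fixed,
and induction on `n` applies to the blocks without their base points. So `S_(A)` lies in the
group generated by finitely many `G(P)`. After splitting `A` into two families of infinitely
many blocks, each `⋃₀ P` has infinite complement, and a permutation of the countable set `Ω`
then carries `P` onto pairs lying in blocks of `B`, so it conjugates `G(P)` into `S_(B)`.
These finitely many conjugators form `U`.
-/

open Equiv Set Function

def supportedSAgrp (R : Set (Set Ω)) : Subgroup (Perm Ω) := pstab (SAgrp R) (⋃₀ R)ᶜ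

def IsPairSystem (P : Set (Set Ω)) : Prop :=
  (∀ p ∈ P, p.encard = 2) ∧ P.PairwiseDisjoint id

def IsPairGenerated (G : Subgroup (Perm Ω)) (S : Set Ω) : Prop :=
  ∃ Ps : Set (Set (Set Ω)), Ps.Finite ∧ (∀ P ∈ Ps, IsPairSystem P ∧ ⋃₀ P ⊆ S) ∧
    G ≤ ⨆ P ∈ Ps, supportedSAgrp P

lemma supportedSAgrp_eq_bot {A : Set (Set Ω)} (h : ⋃₀ A = ∅) : supportedSAgrp A = ⊥ :=
  (Subgroup.eq_bot_iff_forall _).2 fun _ hg => Perm.ext fun x => hg.2 x (h ▸ notMem_empty x)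

lemma SAgrp_le_supportedSAgrp {A : Set (Set Ω)} (hA : ⋃₀ A = univ) :
    SAgrp A ≤ supportedSAgrp A :=
  fun _ hg => ⟨hg, fun x hx => absurd (hA ▸ mem_univ x) hx⟩

lemma supportedSAgrp_le_SAgrp (A : Set (Set Ω)) : supportedSAgrp A ≤ SAgrp A :=
  fun _ hg => hg.1

lemma Equiv.Perm.image_eq_of_mapsTo {g : Perm Ω} {s : Set Ω} (h : MapsTo g s s)
    (h' : MapsTo (g⁻¹ : Perm Ω) s s) : (g : Ω → Ω) '' s = s :=
  (h.image_subset).antisymm fun x hx => ⟨g⁻¹ x, h' hx, g.apply_symm_apply x⟩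

lemma Set.PairwiseDisjoint.eq_of_mem {A : Set (Set Ω)} (hA : A.PairwiseDisjoint id)
    {s t : Set Ω} (hs : s ∈ A) (ht : t ∈ A) {x : Ω} (hxs : x ∈ s) (hxt : x ∈ t) : s = t :=
  hA.elim hs ht (not_disjoint_iff.2 ⟨x, hxs, hxt⟩)

lemma supportedSAgrp_le_of_subset_blocks {R A : Set (Set Ω)} (hA : A.PairwiseDisjoint id)
    (hR : ∀ r ∈ R, ∃ s ∈ A, r ⊆ s) : supportedSAgrp R ≤ supportedSAgrp A := by
  have mapsTo : ∀ g ∈ supportedSAgrp R, ∀ s ∈ A, MapsTo g s s := by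
    intro g hg s hs x hx
    by_cases hxR : x ∈ ⋃₀ R
    · obtain ⟨r, hr, hxr⟩ := hxR
      obtain ⟨t, ht, hrt⟩ := hR r hr
      rw [hA.eq_of_mem hs ht hx (hrt hxr)]
      exact hrt (hg.1 r hr ▸ mem_image_of_mem g hxr)
    · rwa [hg.2 x hxR]
  refine fun g hg => ⟨fun s hs => g.image_eq_of_mapsTo (mapsTo g hg s hs)
    (mapsTo g⁻¹ (inv_mem hg) s hs), fun x hx => hg.2 x fun ⟨r, hr, hxr⟩ => hx ?_⟩
  obtain ⟨t, ht, hrt⟩ := hR r hr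
  exact ⟨t, ht, hrt hxr⟩

lemma conj_mem_supportedSAgrp_image {R : Set (Set Ω)} {g : Perm Ω}
    (hg : g ∈ supportedSAgrp R) (e : Perm Ω) :
    e * g * e⁻¹ ∈ supportedSAgrp (image e '' R) := by
  refine ⟨?_, fun y hy => ?_⟩
  · rintro _ ⟨s, hs, rfl⟩
    simp only [Perm.coe_mul, image_comp, Perm.coe_inv, Equiv.symm_image_image, hg.1 s hs]
  · have : e⁻¹ y ∉ ⋃₀ R := fun ⟨s, hs, hys⟩ =>
      hy ⟨e '' s, mem_image_of_mem _ hs, e⁻¹ y, hys, e.apply_symm_apply y⟩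
    rw [Perm.mul_apply, Perm.mul_apply, hg.2 _ this]
    exact e.apply_symm_apply y

lemma exists_perm_eqOn_of_invariant (g : Perm Ω) {U : Set Ω} (hU : ∀ x, g x ∈ U ↔ x ∈ U) :
    ∃ g' : Perm Ω, EqOn g' g U ∧ ∀ x ∉ U, g' x = x := by
  classical
  exact ⟨Perm.ofSubtype (g.subtypePerm hU), fun x hx => Perm.ofSubtype_apply_of_mem _ hx,
    fun x hx => Perm.ofSubtype_apply_of_not_mem _ hx⟩

lemma supportedSAgrp_union_le {R₁ R₂ : Set (Set Ω)} (h : (R₁ ∪ R₂).PairwiseDisjoint id) :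
    supportedSAgrp (R₁ ∪ R₂) ≤ supportedSAgrp R₁ ⊔ supportedSAgrp R₂ := by
  have mapsTo : ∀ g ∈ supportedSAgrp (R₁ ∪ R₂), MapsTo g (⋃₀ R₁) (⋃₀ R₁) :=
    fun g hg x ⟨s, hs, hx⟩ => ⟨s, hs, hg.1 s (Or.inl hs) ▸ mem_image_of_mem g hx⟩
  intro g hg
  have hU : ∀ x, g x ∈ ⋃₀ R₁ ↔ x ∈ ⋃₀ R₁ := fun x =>
    ⟨fun h => by simpa using mapsTo g⁻¹ (inv_mem hg) h, fun h => mapsTo g hg h⟩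
  obtain ⟨g₁, hg₁U, hg₁⟩ := exists_perm_eqOn_of_invariant g hU
  obtain ⟨g₂, hg₂U, hg₂⟩ := exists_perm_eqOn_of_invariant g (U := (⋃₀ R₁)ᶜ) fun x => (hU x).not
  have hsplit : g = g₁ * g₂ := by
    ext x
    by_cases hx : x ∈ ⋃₀ R₁
    · simp [hg₂ x (not_not.2 hx), hg₁U hx]
    · simp [hg₂U hx, hg₁ (g x) ((hU x).not.2 hx)]
  rw [hsplit]
  refine Subgroup.mul_mem_sup ⟨fun s hs => ?_, hg₁⟩ ⟨fun s hs => ?_, fun x hx => ?_⟩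
  · rw [(hg₁U.mono (subset_sUnion_of_mem hs)).image_eq, hg.1 s (Or.inl hs)]
  · by_cases hs₁ : s ∈ R₁
    · exact EqOn.image_eq_self fun x hx => hg₂ x (not_not_intro ⟨s, hs₁, hx⟩)
    · have hsU : s ⊆ (⋃₀ R₁)ᶜ := fun x hx ⟨t, ht, hxt⟩ =>
        hs₁ (h.eq_of_mem (Or.inr hs) (Or.inl ht) hx hxt ▸ ht)
      rw [(hg₂U.mono hsU).image_eq, hg.1 s (Or.inr hs)]
  · by_cases hx₁ : x ∈ ⋃₀ R₁
    · exact hg₂ x (not_not_intro hx₁)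
    · rw [hg₂U hx₁, hg.2 x (by simp_all [sUnion_union])]

lemma supportedSAgrp_iUnion_le {ι : Type*} [Finite ι] {R : ι → Set (Set Ω)}
    (h : (⋃ i, R i).PairwiseDisjoint id) :
    supportedSAgrp (⋃ i, R i) ≤ ⨆ i, supportedSAgrp (R i) := by
  classical
  cases nonempty_fintype ι
  suffices key : ∀ J : Finset ι, supportedSAgrp (⋃ i ∈ J, R i) ≤ ⨆ i, supportedSAgrp (R i) by
    simpa using key Finset.univ
  intro J
  induction J using Finset.induction_on with
  | empty => simp [supportedSAgrp_eq_bot]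
  | insert i J _ ih =>
    rw [Finset.set_biUnion_insert]
    refine (supportedSAgrp_union_le (h.subset ?_)).trans
      (sup_le (le_iSup (fun i => supportedSAgrp (R i)) i) ih)
    exact union_subset (subset_iUnion R i) (iUnion₂_subset fun j _ => subset_iUnion R j)

/-- The hypothesis makes the pairs `{x, f x}`, `x ∈ X`, pairwise disjoint. -/
lemma exists_perm_swap_along (f : Perm Ω) {X : Set Ω} (hX : ∀ x ∈ X, f x ∈ X → f x = x) :
    ∃ h : Perm Ω, (∀ x ∈ X, h x = f x ∧ h (f x) = x) ∧
      ∀ y ∉ X, f⁻¹ y ∉ X → h y = y := by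
  classical
  let h : Ω → Ω := fun y => if y ∈ X then f y else if f⁻¹ y ∈ X then f⁻¹ y else y
  have h_mem : ∀ x ∈ X, h x = f x := fun x hx => if_pos hx
  have h_image : ∀ x ∈ X, h (f x) = x := by
    intro x hx
    by_cases hfx : f x ∈ X
    · rw [h_mem _ hfx, hX x hx hfx, hX x hx hfx]
    · have hinv : f⁻¹ (f x) = x := f.symm_apply_apply x
      simp only [h, if_neg hfx, hinv, if_pos hx]
  have h_else : ∀ y ∉ X, f⁻¹ y ∉ X → h y = y := fun y hy hy' => by
    simp only [h, if_neg hy, if_neg hy']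
  have hinv : Involutive h := by
    intro y
    by_cases hy : y ∈ X
    · rw [h_mem y hy, h_image y hy]
    · by_cases hy' : f⁻¹ y ∈ X
      · have : h y = f⁻¹ y := by simp only [h, if_neg hy, if_pos hy']
        rw [this, h_mem _ hy']
        exact f.apply_symm_apply y
      · rw [h_else y hy hy', h_else y hy hy']
  exact ⟨hinv.toPerm h, fun x hx => ⟨h_mem x hx, h_image x hx⟩, h_else⟩

lemma exists_mem_supportedSAgrp_swap_along (f : Perm Ω) {X : Set Ω}
    (hX : ∀ x ∈ X, f x ∈ X → f x = x) :
    ∃ h ∈ supportedSAgrp ((fun x => ({x, f x} : Set Ω)) '' {x ∈ X | f x ≠ x}),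
      ∀ x ∈ X, h (f x) = x := by
  obtain ⟨h, hXh, hfix⟩ := exists_perm_swap_along f hX
  refine ⟨h, ⟨?_, fun y hy => ?_⟩, fun x hx => (hXh x hx).2⟩
  · rintro _ ⟨x, ⟨hx, -⟩, rfl⟩
    rw [image_pair, (hXh x hx).1, (hXh x hx).2, pair_comm]
  by_cases hyX : y ∈ X
  · rw [(hXh y hyX).1]
    by_contra hne
    exact hy ⟨_, ⟨y, ⟨hyX, hne⟩, rfl⟩, mem_insert _ _⟩
  by_cases hyX' : f⁻¹ y ∈ X
  · have hy' : f (f⁻¹ y) = y := f.apply_symm_apply y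
    have hne : f (f⁻¹ y) ≠ f⁻¹ y := fun h' => hyX (h'.symm.trans hy' ▸ hyX')
    refine absurd ⟨_, ⟨_, ⟨hyX', hne⟩, rfl⟩, ?_⟩ hy
    exact mem_insert_of_mem _ hy'.symm
  · exact hfix y hyX hyX'

lemma Set.PairwiseDisjoint.image_of_subset {A : Set (Set Ω)} (hA : A.PairwiseDisjoint id)
    {F : Set Ω → Set Ω} (hF : ∀ s ∈ A, F s ⊆ s) : (F '' A).PairwiseDisjoint id := by
  rintro _ ⟨s, hs, rfl⟩ _ ⟨t, ht, rfl⟩ hne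
  exact (hA hs ht fun h => hne (h ▸ rfl)).mono (hF s hs) (hF t ht)

lemma exists_fin_range_eq {s : Set Ω} (hs : s.Nonempty) {n : ℕ} (h : s.encard ≤ n) :
    ∃ e : Fin n → Ω, range e = s := by
  have : Nonempty (Fin n) := ⟨⟨0, by exact_mod_cast (encard_pos.2 hs).trans_le h⟩⟩
  obtain ⟨f, -, hf⟩ := (finite_of_encard_le_coe h).exists_injOn_of_encard_le
    (t := (univ : Set (Fin n))) (by simpa using h)
  have := hs.to_subtype
  refine ⟨Subtype.val ∘ invFun (s.domRestrict f), ?_⟩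
  rw [range_comp, (invFun_surjective (injOn_iff_injective.1 hf)).range_eq,
    image_univ, Subtype.range_coe]

lemma mem_supportedSAgrp_sdiff {A : Set (Set Ω)} {g : Perm Ω} (hg : g ∈ supportedSAgrp A)
    {c : Set Ω → Ω} (hc : ∀ s ∈ A, g (c s) = c s) :
    g ∈ supportedSAgrp ((fun s => s \ {c s}) '' A \ {∅}) := by
  refine ⟨?_, fun x hx => ?_⟩
  · rintro _ ⟨⟨s, hs, rfl⟩, -⟩
    rw [image_sdiff g.injective, hg.1 s hs, image_singleton, hc s hs]
  · by_cases hxA : x ∈ ⋃₀ A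
    · obtain ⟨s, hs, hxs⟩ := hxA
      by_contra hne
      have hxc : x ≠ c s := fun h => hne (h ▸ hc s hs)
      exact hx ⟨s \ {c s}, ⟨⟨s, hs, rfl⟩, nonempty_iff_ne_empty.1 ⟨x, hxs, hxc⟩⟩, hxs, hxc⟩
    · exact hg.2 x hxA

lemma sUnion_subset_of_subset_blocks {R A : Set (Set Ω)} (h : ∀ r ∈ R, ∃ s ∈ A, r ⊆ s) :
    ⋃₀ R ⊆ ⋃₀ A := fun _ ⟨r, hr, hx⟩ =>
  let ⟨s, hs, hrs⟩ := h r hr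
  ⟨s, hs, hrs hx⟩

lemma IsPairGenerated.mono {G : Subgroup (Perm Ω)} {S T : Set Ω} (hG : IsPairGenerated G S)
    (hST : S ⊆ T) : IsPairGenerated G T :=
  let ⟨Ps, hfin, hPs, hle⟩ := hG
  ⟨Ps, hfin, fun P hP => ⟨(hPs P hP).1, (hPs P hP).2.trans hST⟩, hle⟩

/-- `e s` is meant to enumerate the block `s`; each block contributes at most one pair. -/
def blockPairs (A : Set (Set Ω)) {n : ℕ} (e : Set Ω → Fin n → Ω) (i j : Fin n) :
    Set (Set Ω) :=
  (fun s => {e s i, e s j}) '' {s ∈ A | e s j ≠ e s i}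

section blockPairs

variable {A : Set (Set Ω)} {n : ℕ} {e : Set Ω → Fin n → Ω}

lemma isPairSystem_blockPairs (hA : A.PairwiseDisjoint id) (he : ∀ s ∈ A, range (e s) = s)
    (i j : Fin n) : IsPairSystem (blockPairs A e i j) := by
  refine ⟨?_, (hA.subset (sep_subset _ _)).image_of_subset fun s hs =>
    pair_subset ((he s hs.1).le (mem_range_self i)) ((he s hs.1).le (mem_range_self j))⟩
  rintro _ ⟨s, ⟨-, hne⟩, rfl⟩
  exact encard_pair hne.symm

lemma blockPairs_subset_blocks (he : ∀ s ∈ A, range (e s) = s) (i j : Fin n) :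
    ∀ p ∈ blockPairs A e i j, ∃ s ∈ A, p ⊆ s := by
  rintro _ ⟨s, ⟨hs, -⟩, rfl⟩
  exact ⟨s, hs, pair_subset ((he s hs).le (mem_range_self i)) ((he s hs).le (mem_range_self j))⟩

/-- `h` swaps every `e s i` with `f (e s i)`; sorted by the index `j` with
`f (e s i) = e s j`, these swaps lie in the groups of the pair systems `blockPairs A e i j`. -/
lemma exists_mem_iSup_blockPairs (hA : A.PairwiseDisjoint id)
    (he : ∀ s ∈ A, range (e s) = s) (i : Fin n) {f : Perm Ω} (hf : f ∈ supportedSAgrp A) :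
    ∃ h ∈ ⨆ j, supportedSAgrp (blockPairs A e i j), ∀ s ∈ A, h (f (e s i)) = e s i := by
  have he_mem : ∀ s ∈ A, ∀ j, e s j ∈ s := fun s hs j => (he s hs).le (mem_range_self j)
  have hf_mem : ∀ s ∈ A, f (e s i) ∈ s := fun s hs =>
    (hf.1 s hs).le (mem_image_of_mem f (he_mem s hs i))
  set X := (fun s => e s i) '' A
  have hX : ∀ x ∈ X, f x ∈ X → f x = x := by
    rintro _ ⟨s, hs, rfl⟩ ⟨t, ht, hft : e t i = f (e s i)⟩
    rw [← hft, hA.eq_of_mem ht hs (he_mem t ht i) (hft ▸ hf_mem s hs)]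
  obtain ⟨h, h_mem, hfix⟩ := exists_mem_supportedSAgrp_swap_along f hX
  set RF := (fun x => ({x, f x} : Set Ω)) '' {x ∈ X | f x ≠ x}
  have hRF : RF.PairwiseDisjoint id := by
    rintro _ ⟨_, ⟨⟨s, hs, rfl⟩, -⟩, rfl⟩ _ ⟨_, ⟨⟨t, ht, rfl⟩, -⟩, rfl⟩ hne
    exact (hA hs ht fun hst => hne (hst ▸ rfl)).mono
      (pair_subset (he_mem s hs i) (hf_mem s hs)) (pair_subset (he_mem t ht i) (hf_mem t ht))
  have hRF_cover : RF = ⋃ j, RF ∩ blockPairs A e i j := by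
    rw [← inter_iUnion, left_eq_inter]
    rintro _ ⟨_, ⟨⟨s, hs, rfl⟩, hne⟩, rfl⟩
    obtain ⟨j, hj⟩ : f (e s i) ∈ range (e s) := (he s hs).ge (hf_mem s hs)
    exact mem_iUnion.2 ⟨j, s, ⟨hs, by rwa [hj]⟩, by simp only [hj]⟩
  refine ⟨h, ?_, fun s hs => hfix _ ⟨s, hs, rfl⟩⟩
  rw [hRF_cover] at h_mem hRF
  have hle : ⨆ j, supportedSAgrp (RF ∩ blockPairs A e i j) ≤
      ⨆ j, supportedSAgrp (blockPairs A e i j) := iSup_mono fun j =>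
    supportedSAgrp_le_of_subset_blocks (isPairSystem_blockPairs hA he i j).2
      fun r hr => ⟨r, hr.2, subset_rfl⟩
  exact hle (supportedSAgrp_iUnion_le hRF h_mem)

lemma isPairGenerated_of_sdiff (hA : A.PairwiseDisjoint id) (he : ∀ s ∈ A, range (e s) = s)
    (i : Fin n) (h' : IsPairGenerated (supportedSAgrp ((fun s => s \ {e s i}) '' A \ {∅})) (⋃₀ A)) :
    IsPairGenerated (supportedSAgrp A) (⋃₀ A) := by
  obtain ⟨Ps, hPs, hPsP, hle⟩ := h'
  set Ps' := range (blockPairs A e i) ∪ Ps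
  refine ⟨Ps', (finite_range _).union hPs, ?_, fun f hf => ?_⟩
  · rintro P (⟨j, rfl⟩ | hP)
    · exact ⟨isPairSystem_blockPairs hA he i j,
        sUnion_subset_of_subset_blocks (blockPairs_subset_blocks he i j)⟩
    · exact hPsP P hP
  obtain ⟨h, hh, hfix⟩ := exists_mem_iSup_blockPairs hA he i hf
  have hhA : h ∈ supportedSAgrp A := (iSup_le fun j =>
    supportedSAgrp_le_of_subset_blocks hA (blockPairs_subset_blocks he i j)) hh
  have hsub : ⨆ j, supportedSAgrp (blockPairs A e i j) ≤ ⨆ P ∈ Ps', supportedSAgrp P :=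
    iSup_le fun j => le_iSup₂ (f := fun P (_ : P ∈ Ps') => supportedSAgrp P) _
      (Or.inl ⟨j, rfl⟩)
  have hsub' : ⨆ P ∈ Ps, supportedSAgrp P ≤ ⨆ P ∈ Ps', supportedSAgrp P :=
    biSup_mono fun P hP => Or.inr hP
  rw [show f = h⁻¹ * (h * f) by group]
  exact mul_mem (inv_mem (hsub hh))
    (hsub' (hle (mem_supportedSAgrp_sdiff (mul_mem hhA hf) hfix)))

end blockPairs

theorem isPairGenerated_supportedSAgrp (m : ℕ) :
    ∀ A : Set (Set Ω), A.PairwiseDisjoint id → (∀ s ∈ A, s.Nonempty ∧ s.encard ≤ m) →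
      IsPairGenerated (supportedSAgrp A) (⋃₀ A) := by
  have of_sUnion_eq_empty : ∀ A : Set (Set Ω), ⋃₀ A = ∅ →
      IsPairGenerated (supportedSAgrp A) (⋃₀ A) := fun A h =>
    ⟨∅, finite_empty, by simp, by rw [supportedSAgrp_eq_bot h]; exact bot_le⟩
  induction m with
  | zero =>
    refine fun A _ hA => of_sUnion_eq_empty A (sUnion_eq_empty.2 fun s hs => ?_)
    exact encard_eq_zero.1 (nonpos_iff_eq_zero.1 (by exact_mod_cast (hA s hs).2))
  | succ m ih =>
    intro A hA hAm
    rcases (⋃₀ A).eq_empty_or_nonempty with h0 | ⟨x₀, -⟩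
    · exact of_sUnion_eq_empty A h0
    have : Nonempty Ω := ⟨x₀⟩
    choose! e he using fun s hs =>
      exists_fin_range_eq (hAm s hs).1 (n := m + 1) (by exact_mod_cast (hAm s hs).2)
    set A' := (fun s => s \ {e s 0}) '' A \ {∅}
    have hA' : A'.PairwiseDisjoint id :=
      (hA.image_of_subset fun _ _ => sdiff_subset).subset sdiff_subset
    have hA'm : ∀ t ∈ A', t.Nonempty ∧ t.encard ≤ m := by
      rintro _ ⟨⟨s, hs, rfl⟩, hne⟩
      refine ⟨nonempty_iff_ne_empty.2 hne, ?_⟩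
      rw [← ENat.add_le_add_iff_right ENat.one_ne_top,
        encard_sdiff_singleton_add_one ((he s hs).le (mem_range_self 0))]
      exact_mod_cast (hAm s hs).2
    have hA'A : ⋃₀ A' ⊆ ⋃₀ A := sUnion_subset_of_subset_blocks
      fun _ ⟨⟨s, hs, hst⟩, _⟩ => ⟨s, hs, hst ▸ sdiff_subset⟩
    exact isPairGenerated_of_sdiff hA he 0 ((ih A' hA' hA'm).mono hA'A)

lemma exists_perm_image_eq {ι : Type*} {s t : ι → Set Ω} (hs : Pairwise (Disjoint on s))
    (ht : Pairwise (Disjoint on t)) (est : ∀ i, s i ≃ t i)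
    (ec : ((⋃ i, s i)ᶜ : Set Ω) ≃ ((⋃ i, t i)ᶜ : Set Ω)) :
    ∃ g : Perm Ω, ∀ i, (g : Ω → Ω) '' s i = t i := by
  classical
  let σ : (⋃ i, s i : Set Ω) ≃ (⋃ i, t i : Set Ω) := (unionEqSigmaOfDisjoint hs).trans
    ((Equiv.sigmaCongrRight est).trans (unionEqSigmaOfDisjoint ht).symm)
  let g : Perm Ω :=
    ((Equiv.Set.sumCompl _).symm.trans (Equiv.sumCongr σ ec)).trans (Equiv.Set.sumCompl _)
  have hg_in : ∀ i x (hx : x ∈ s i), g x = est i ⟨x, hx⟩ := by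
    intro i x hx
    have hσ : unionEqSigmaOfDisjoint hs ⟨x, mem_iUnion.2 ⟨i, hx⟩⟩ = ⟨i, ⟨x, hx⟩⟩ :=
      (Equiv.symm_apply_eq _).2 rfl
    simp [g, σ, Equiv.Set.sumCompl_symm_apply_of_mem (mem_iUnion.2 ⟨i, hx⟩), hσ]
  have hg_out : ∀ x (hx : x ∉ ⋃ i, s i), g x = ec ⟨x, hx⟩ := by
    intro x hx
    simp [g, Equiv.Set.sumCompl_symm_apply_of_notMem hx]
  have hmem : ∀ i x, g x ∈ t i ↔ x ∈ s i := by
    refine fun i x => ⟨fun hgx => ?_, fun hx => hg_in i x hx ▸ (est i ⟨x, hx⟩).2⟩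
    by_contra hx
    by_cases hxU : x ∈ ⋃ i, s i
    · obtain ⟨j, hxj⟩ := mem_iUnion.1 hxU
      have hij : i ≠ j := fun h => hx (h ▸ hxj)
      exact disjoint_left.1 (ht hij) hgx (hg_in j x hxj ▸ (est j ⟨x, hxj⟩).2)
    · exact (hg_out x hxU ▸ (ec ⟨x, hxU⟩).2) (mem_iUnion.2 ⟨i, hgx⟩)
  refine ⟨g, fun i => ?_⟩
  ext y
  rw [Equiv.image_eq_preimage_symm, mem_preimage, ← hmem i, Equiv.apply_symm_apply]

lemma Set.Finite.nonempty_equiv_of_encard_eq {s t : Set Ω} (hs : s.Finite)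
    (h : s.encard = t.encard) : Nonempty (s ≃ t) := by
  have := hs.to_subtype
  have := (encard_ne_top_iff.1 (h ▸ hs.encard_lt_top.ne)).to_subtype
  rw [← Finite.card_eq, Nat.card_coe_set_eq, Nat.card_coe_set_eq, ncard_def, ncard_def, h]

lemma Set.Infinite.nonempty_equiv [Countable Ω] {s t : Set Ω} (hs : s.Infinite)
    (ht : t.Infinite) : Nonempty (s ≃ t) := by
  have := hs.to_subtype
  have := ht.to_subtype
  rw [← Cardinal.eq, Cardinal.mk_eq_aleph0, Cardinal.mk_eq_aleph0]

lemma Set.PairwiseDisjoint.countable_of_forall_nonempty [Countable Ω] {P : Set (Set Ω)}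
    (hP : P.PairwiseDisjoint id) (hne : ∀ p ∈ P, p.Nonempty) : P.Countable := by
  have hinj : Injective fun p : P => (hne p p.2).some := fun p q
      (h : (hne p p.2).some = (hne q q.2).some) =>
    Subtype.ext (hP.eq_of_mem p.2 q.2 (hne p p.2).some_mem (h ▸ (hne q q.2).some_mem))
  exact countable_coe_iff.1 hinj.countable

/-- Only every other pair of `Q` is used, so that the complements of both supports are
countably infinite. -/
lemma exists_perm_image_mem [Countable Ω] {P Q : Set (Set Ω)} (hP : IsPairSystem P)
    (hPc : (⋃₀ P)ᶜ.Infinite) (hQ : IsPairSystem Q) (hQi : Q.Infinite) :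
    ∃ g : Perm Ω, ∀ p ∈ P, (g : Ω → Ω) '' p ∈ Q := by
  have hPne : ∀ p ∈ P, p.Nonempty := fun p hp =>
    nonempty_of_encard_ne_zero (by simp [hP.1 p hp])
  have := (hP.2.countable_of_forall_nonempty hPne).to_subtype
  obtain ⟨ι, hι⟩ := Countable.exists_injective_nat P
  set φ := hQi.natEmbedding
  let Φ : P → Q := fun p => φ (2 * ι p + 1)
  have hΦ : Injective Φ := fun p q h => hι (by have := φ.injective h; omega)
  have hQdisj : Pairwise (Disjoint on fun q : Q => (q : Set Ω)) := fun q q' h =>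
    hQ.2 q.2 q'.2 (Subtype.coe_injective.ne h)
  have hfree : ⋃₀ range (fun n => (φ (2 * n) : Set Ω)) ⊆ (⋃ p, (Φ p : Set Ω))ᶜ := by
    rintro x ⟨_, ⟨n, rfl⟩, hx⟩ hx'
    obtain ⟨p, hp⟩ := mem_iUnion.1 hx'
    have hne : φ (2 * n) ≠ Φ p := fun h => by have := φ.injective h; omega
    exact disjoint_left.1 (hQdisj hne) hx hp
  have hfree_inf : (⋃₀ range fun n => (φ (2 * n) : Set Ω)).Infinite :=
    (infinite_range_of_injective fun m n h => by
      have := φ.injective (Subtype.coe_injective h); omega).sUnion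
  obtain ⟨g, hg⟩ := exists_perm_image_eq (s := fun p : P => (p : Set Ω))
    (t := fun p => (Φ p : Set Ω)) (fun p q h => hP.2 p.2 q.2 (Subtype.coe_injective.ne h))
    (fun p q h => hQdisj (hΦ.ne h))
    (fun p => ((finite_of_encard_eq_coe (hP.1 p p.2)).nonempty_equiv_of_encard_eq
      ((hP.1 p p.2).trans (hQ.1 _ (Φ p).2).symm)).some)
    ((by rwa [← sUnion_eq_iUnion] : (⋃ p : P, (p : Set Ω))ᶜ.Infinite).nonempty_equiv
      (hfree_inf.mono hfree)).some
  exact ⟨g, fun p hp => (hg ⟨p, hp⟩).symm ▸ (Φ ⟨p, hp⟩).2⟩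

lemma exists_conj_mem_SAgrp [Countable Ω] {P Q B : Set (Set Ω)} (hP : IsPairSystem P)
    (hPc : (⋃₀ P)ᶜ.Infinite) (hQ : IsPairSystem Q) (hQi : Q.Infinite)
    (hB : B.PairwiseDisjoint id) (hQB : ∀ q ∈ Q, ∃ t ∈ B, q ⊆ t) :
    ∃ e : Perm Ω, ∀ g ∈ supportedSAgrp P, e * g * e⁻¹ ∈ SAgrp B := by
  obtain ⟨e, he⟩ := exists_perm_image_mem hP hPc hQ hQi
  refine ⟨e, fun g hg => supportedSAgrp_le_SAgrp B
    (supportedSAgrp_le_of_subset_blocks hB ?_ (conj_mem_supportedSAgrp_image hg e))⟩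
  rintro _ ⟨p, hp, rfl⟩
  exact hQB _ (he p hp)

lemma exists_infinite_pairSystem {B : Set (Set Ω)} (hB : B.PairwiseDisjoint id)
    (hinf : {t | t ∈ B ∧ 1 < t.encard}.Infinite) :
    ∃ Q : Set (Set Ω), IsPairSystem Q ∧ Q.Infinite ∧ ∀ q ∈ Q, ∃ t ∈ B, q ⊆ t := by
  have : Nonempty Ω := by
    obtain ⟨t, -, ht⟩ := hinf.nonempty
    exact (nonempty_of_encard_ne_zero (zero_lt_one.trans ht).ne').to_subtype.map Subtype.val
  choose! a b ha hb hab using fun t (ht : t ∈ {t | t ∈ B ∧ 1 < t.encard}) =>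
    one_lt_encard_iff.1 ht.2
  have hsub : ∀ t ∈ {t | t ∈ B ∧ 1 < t.encard}, ({a t, b t} : Set Ω) ⊆ t := fun t ht =>
    pair_subset (ha t ht) (hb t ht)
  refine ⟨(fun t => {a t, b t}) '' {t | t ∈ B ∧ 1 < t.encard}, ⟨?_, ?_⟩, ?_, ?_⟩
  · rintro _ ⟨t, ht, rfl⟩
    exact encard_pair (hab t ht)
  · exact (hB.subset (sep_subset _ _)).image_of_subset hsub
  · refine hinf.image fun t ht t' ht' h => hB.eq_of_mem ht.1 ht'.1 (ha t ht) ?_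
    exact hsub t' ht' (h ▸ mem_insert (a t) {b t})
  · rintro _ ⟨t, ht, rfl⟩
    exact ⟨t, ht.1, hsub t ht⟩

lemma Set.PairwiseDisjoint.disjoint_sUnion {A S T : Set (Set Ω)} (hA : A.PairwiseDisjoint id)
    (hS : S ⊆ A) (hT : T ⊆ A) (hST : Disjoint S T) : Disjoint (⋃₀ S) (⋃₀ T) := by
  rw [disjoint_left]
  rintro x ⟨s, hs, hxs⟩ ⟨t, ht, hxt⟩
  exact disjoint_left.1 hST hs (hA.eq_of_mem (hS hs) (hT ht) hxs hxt ▸ ht)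

lemma exists_union_eq_of_infinite {A : Set (Set Ω)} (hA : A.PairwiseDisjoint id)
    (hinf : A.Infinite) :
    ∃ A₀ A₁, A = A₀ ∪ A₁ ∧ (⋃₀ A₀)ᶜ.Infinite ∧ (⋃₀ A₁)ᶜ.Infinite := by
  set φ := hinf.natEmbedding
  set S : ℕ → Set (Set Ω) := fun k => range fun n => (φ (2 * n + k) : Set Ω)
  have hSA : ∀ k, S k ⊆ A := by
    rintro k _ ⟨n, rfl⟩
    exact (φ _).2
  have hS_inf : ∀ k, (⋃₀ S k).Infinite := fun k =>
    (infinite_range_of_injective fun m n h => by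
      have := φ.injective (Subtype.coe_injective h); omega).sUnion
  have hS01 : Disjoint (S 0) (S 1) := by
    rw [disjoint_left]
    rintro _ ⟨m, rfl⟩ ⟨n, hn⟩
    have := φ.injective (Subtype.coe_injective hn)
    omega
  refine ⟨A \ S 0, S 0, (sdiff_union_of_subset (hSA 0)).symm, ?_, ?_⟩
  · exact (hS_inf 0).mono
      (hA.disjoint_sUnion (hSA 0) sdiff_subset disjoint_sdiff_right).subset_compl_right
  · exact (hS_inf 1).mono (hA.disjoint_sUnion (hSA 1) (hSA 0) hS01.symm).subset_compl_right

lemma Subgroup.le_closure_union_of_conj_mem {G : Type*} [Group G] {H K : Subgroup G}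
    {U : Set G} {e : G} (he : e ∈ U) (h : ∀ g ∈ H, e * g * e⁻¹ ∈ K) :
    H ≤ Subgroup.closure (K ∪ U) := by
  intro g hg
  have he' : e ∈ Subgroup.closure (K ∪ U) := Subgroup.subset_closure (Or.inr he)
  rw [show g = e⁻¹ * (e * g * e⁻¹) * e by group]
  exact mul_mem (mul_mem (inv_mem he') (Subgroup.subset_closure (Or.inl (h g hg)))) he'

lemma PrecF.mono {G G' K : Subgroup (Perm Ω)} (h : G ≤ G') (hG' : PrecF G' K) : PrecF G K :=
  let ⟨U, hU, hle⟩ := hG'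
  ⟨U, hU, h.trans hle⟩

lemma PrecF.sup {G₁ G₂ K : Subgroup (Perm Ω)} (h₁ : PrecF G₁ K) (h₂ : PrecF G₂ K) :
    PrecF (G₁ ⊔ G₂) K := by
  obtain ⟨U₁, hU₁, hle₁⟩ := h₁
  obtain ⟨U₂, hU₂, hle₂⟩ := h₂
  refine ⟨U₁ ∪ U₂, hU₁.union hU₂, sup_le (hle₁.trans ?_) (hle₂.trans ?_)⟩ <;>
    exact Subgroup.closure_mono (union_subset_union_right _ (by simp))

lemma IsPairGenerated.precF_SAgrp [Countable Ω] {G : Subgroup (Perm Ω)} {S : Set Ω}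
    (hG : IsPairGenerated G S) (hS : Sᶜ.Infinite) {B : Set (Set Ω)} (hB : B.PairwiseDisjoint id)
    (hBinf : {t | t ∈ B ∧ 1 < t.encard}.Infinite) : PrecF G (SAgrp B) := by
  obtain ⟨Ps, hfin, hPs, hle⟩ := hG
  obtain ⟨Q, hQ, hQi, hQB⟩ := exists_infinite_pairSystem hB hBinf
  choose! e he using fun P hP => exists_conj_mem_SAgrp (hPs P hP).1
    (hS.mono (compl_subset_compl.2 (hPs P hP).2)) hQ hQi hB hQB
  exact ⟨e '' Ps, hfin.image e, hle.trans (iSup₂_le fun P hP =>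
    Subgroup.le_closure_union_of_conj_mem (mem_image_of_mem e hP) (he P hP))⟩

lemma precF_SAgrp_of_memQ [Countable Ω] {A B : Set (Set Ω)} (hA : MemQ A) (hB : MemQ B) :
    PrecF (SAgrp A) (SAgrp B) := by
  obtain ⟨⟨hne, hdisj, hcov⟩, ⟨n, hn⟩, hinf⟩ := hA
  obtain ⟨A₀, A₁, rfl, h₀, h₁⟩ := exists_union_eq_of_infinite hdisj (hinf.mono (sep_subset _ _))
  have piece : ∀ A' ⊆ A₀ ∪ A₁, (⋃₀ A')ᶜ.Infinite → PrecF (supportedSAgrp A') (SAgrp B) :=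
    fun A' hA' hc => (isPairGenerated_supportedSAgrp n A' (hdisj.subset hA')
      fun s hs => ⟨hne s (hA' hs), hn s (hA' hs)⟩).precF_SAgrp hc hB.1.2.1 hB.2.2
  refine ((piece A₀ subset_union_left h₀).sup (piece A₁ subset_union_right h₁)).mono ?_
  exact (SAgrp_le_supportedSAgrp hcov).trans (supportedSAgrp_union_le hdisj)

theorem stmt11_general {Ω : Type u} [Countable Ω] (A B : Set (Set Ω))
    (hA : MemQ A) (hB : MemQ B) : ApproxF (SAgrp A) (SAgrp B) :=
  ⟨precF_SAgrp_of_memQ hA hB, precF_SAgrp_of_memQ hB hA⟩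

/-- (26) of Section 7: the subgroups `S_(A)`, `A ∈ 𝒬`, are mutually
`≈`-equivalent. -/
theorem stmt11 {Ω : Type u} [Countable Ω] [Infinite Ω] (A B : Set (Set Ω))
    (hA : MemQ A) (hB : MemQ B) : ApproxF (SAgrp A) (SAgrp B) :=
  stmt11_general A B hA hB
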